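/- arXiv:1605.00781 — 3 statements merged into one kernel-verified Lean document; each statement's English description precedes it below -/
import Mathlib

section
/- Let G and H be finitely generated groups that are two-sided configuration equivalent. Then G and H have the same class number: for every natural number N, G has at least N distinct conjugacy classes if and only if H has at least N distinct conjugacy classes; in particular, G has finitely many conjugacy classes if and only if H does, and in that case the numbers of conjugacy classes of G and of H are equal. -/
/-- `g` is an ordered generating tuple of `G`. -/
def Generates {G : Type*} [Group G] {n : ℕ} (g : Fin n → G) : Prop :=
  Subgroup.closure (Set.range g) = ⊤

/-- The two-sided configuration set of the configuration pair `(g, c)`: a two-sided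
configuration is a tuple `(c₀, (c₁, …, c_n), (c_{n+1}, …, c_{2n}))` of colors realized by
some `x ∈ G`, i.e. `c x = c₀`, `c (gᵢ * x) = cᵢ` and `c (x * gᵢ) = c_{n+i}` for all `i`. -/
def ConfigT {G : Type*} [Group G] {n m : ℕ} (g : Fin n → G) (c : G → Fin m) :
    Set (Fin m × (Fin n → Fin m) × (Fin n → Fin m)) :=
  { p | ∃ x : G, c x = p.1 ∧ (∀ i, c (g i * x) = p.2.1 i) ∧ (∀ i, c (x * g i) = p.2.2 i) }

/-- Two-sided configuration equivalence of groups. -/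
def ConfigTEquiv (G H : Type*) [Group G] [Group H] : Prop :=
  (∀ (n m : ℕ) (g : Fin n → G) (c : G → Fin m), Generates g →
    ∃ (h : Fin n → H) (d : H → Fin m), Generates h ∧ ConfigT g c = ConfigT h d) ∧
  (∀ (n m : ℕ) (h : Fin n → H) (d : H → Fin m), Generates h →
    ∃ (g : Fin n → G) (c : G → Fin m), Generates g ∧ ConfigT h d = ConfigT g c)

/-- A finitely generated group has a generating tuple. -/
lemma exists_generates (G : Type*) [Group G] [Group.FG G] :
    ∃ (n : ℕ) (g : Fin n → G), Generates g := by
  obtain ⟨n, S, _, hS⟩ := Group.fg_iff'.1 ‹Group.FG G›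
  classical
  refine ⟨S.card, fun i => S.equivFin.symm i, ?_⟩
  unfold Generates
  convert hS using 2
  ext x
  constructor
  · rintro ⟨i, rfl⟩; exact (S.equivFin.symm i).2
  · intro hx; exact ⟨S.equivFin ⟨x, hx⟩, by simp⟩

lemma fin_transfer (A B : Type*)
    (hAB : ∀ N : ℕ, (∃ f : Fin N → A, Function.Injective f) →
      ∃ f : Fin N → B, Function.Injective f) (hB : Finite B) : Finite A := by
  by_contra hA
  have : Infinite A := not_finite_iff_infinite.1 hA
  obtain ⟨f, hf⟩ := hAB (Nat.card B + 1)
    ⟨fun i => (Infinite.natEmbedding A) i.val,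
      (Infinite.natEmbedding A).injective.comp Fin.val_injective⟩
  have hle := Nat.card_le_card_of_injective f hf
  simp only [Nat.card_eq_fintype_card, Fintype.card_fin] at hle
  omega

lemma card_le_transfer (A B : Type*) [Finite A] [Finite B]
    (hAB : ∀ N : ℕ, (∃ f : Fin N → A, Function.Injective f) →
      ∃ f : Fin N → B, Function.Injective f) : Nat.card A ≤ Nat.card B := by
  obtain ⟨f, hf⟩ := hAB (Nat.card A)
    ⟨(Finite.equivFin A).symm, (Finite.equivFin A).symm.injective⟩
  have := Nat.card_le_card_of_injective f hf
  simpa using this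

/-- The main transfer lemma. -/
lemma transfer {G H : Type*} [Group G] [Group H] [Group.FG G]
    (hd : ∀ (n m : ℕ) (g : Fin n → G) (c : G → Fin m), Generates g →
      ∃ (h : Fin n → H) (d : H → Fin m), Generates h ∧ ConfigT g c = ConfigT h d)
    (N : ℕ) (f : Fin N → ConjClasses G) (hf : Function.Injective f) :
    ∃ f' : Fin N → ConjClasses H, Function.Injective f' := by
  classical
  rcases Nat.eq_zero_or_pos N with h0 | hN
  · subst h0; exact ⟨Fin.elim0, fun i => i.elim0⟩
  have : NeZero N := ⟨hN.ne'⟩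
  obtain ⟨n, g, hg⟩ := exists_generates G
  set F : ConjClasses G → Fin N := fun y => if h : ∃ i, f i = y then h.choose else 0 with hF
  set c : G → Fin N := fun x => F (ConjClasses.mk x) with hc
  have hconj : ∀ a x : G, c (a * x) = c (x * a) := by
    intro a x
    show F _ = F _
    congr 1
    rw [ConjClasses.mk_eq_mk_iff_isConj]
    exact isConj_iff.2 ⟨x, by group⟩
  have hsurj : ∀ j : Fin N, ∃ x : G, c x = j := by
    intro j
    obtain ⟨x, hx⟩ := ConjClasses.exists_rep (f j)
    refine ⟨x, ?_⟩
    show F (ConjClasses.mk x) = j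
    rw [hx]
    have he : ∃ i, f i = f j := ⟨j, rfl⟩
    simp only [hF, dif_pos he]
    exact hf he.choose_spec
  obtain ⟨h, d, hh, hcd⟩ := hd n N g c hg
  -- d takes all values
  have hdsurj : ∀ j : Fin N, ∃ y : H, d y = j := by
    intro j
    obtain ⟨x, hx⟩ := hsurj j
    have hp : (⟨j, fun i => c (g i * x), fun i => c (x * g i)⟩ :
        Fin N × (Fin n → Fin N) × (Fin n → Fin N)) ∈ ConfigT g c :=
      ⟨x, hx, fun _ => rfl, fun _ => rfl⟩
    rw [hcd] at hp
    obtain ⟨y, hy, -, -⟩ := hp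
    exact ⟨y, hy⟩
  -- d is invariant under generators
  have hdinv0 : ∀ (i : Fin n) (y : H), d (h i * y) = d (y * h i) := by
    intro i y
    have hp : (⟨d y, fun i => d (h i * y), fun i => d (y * h i)⟩ :
        Fin N × (Fin n → Fin N) × (Fin n → Fin N)) ∈ ConfigT h d :=
      ⟨y, rfl, fun _ => rfl, fun _ => rfl⟩
    rw [← hcd] at hp
    obtain ⟨x, -, hx2, hx3⟩ := hp
    have e2 : c (g i * x) = d (h i * y) := hx2 i
    have e3 : c (x * g i) = d (y * h i) := hx3 i
    rw [← e2, ← e3, hconj]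
  -- d is invariant under all elements
  have hdinv : ∀ a y : H, d (a * y) = d (y * a) := by
    let T : Subgroup H :=
      { carrier := {a : H | ∀ y, d (a * y) = d (y * a)}
        one_mem' := by intro y; rw [one_mul, mul_one]
        mul_mem' := by
          intro a b ha hb y
          calc d (a * b * y) = d (a * (b * y)) := by rw [mul_assoc]
            _ = d (b * y * a) := ha _
            _ = d (b * (y * a)) := by rw [mul_assoc]
            _ = d (y * a * b) := hb _
            _ = d (y * (a * b)) := by rw [mul_assoc]
        inv_mem' := by
          intro a ha y
          have := ha (a⁻¹ * y * a⁻¹)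
          rw [show a * (a⁻¹ * y * a⁻¹) = y * a⁻¹ by group,
              show a⁻¹ * y * a⁻¹ * a = a⁻¹ * y by group] at this
          exact this.symm }
    have hT : T = ⊤ := by
      rw [eq_top_iff, ← hh]
      apply Subgroup.closure_le T |>.2
      rintro - ⟨i, rfl⟩
      exact hdinv0 i
    intro a y
    have ha : a ∈ T := hT ▸ Subgroup.mem_top a
    exact ha y
  -- d is constant on conjugacy classes
  have hdconj : ∀ y z : H, IsConj y z → d y = d z := by
    intro y z hyz
    obtain ⟨u, hu⟩ := isConj_iff.1 hyz
    calc d y = d (y * u⁻¹ * u) := by group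
      _ = d (u * (y * u⁻¹)) := (hdinv u (y * u⁻¹)).symm
      _ = d z := by rw [← hu]; congr 1; group
  refine ⟨fun j => ConjClasses.mk (hdsurj j).choose, ?_⟩
  intro j k hjk
  rw [ConjClasses.mk_eq_mk_iff_isConj] at hjk
  have := hdconj _ _ hjk
  rw [(hdsurj j).choose_spec, (hdsurj k).choose_spec] at this
  exact this

theorem stmt5 (G H : Type*) [Group G] [Group H] [Group.FG G] [Group.FG H]
    (hGH : ConfigTEquiv G H) :
    (∀ N : ℕ, (∃ f : Fin N → ConjClasses G, Function.Injective f) ↔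
      (∃ f : Fin N → ConjClasses H, Function.Injective f)) ∧
    (Finite (ConjClasses G) ↔ Finite (ConjClasses H)) ∧
    (Finite (ConjClasses G) → Nat.card (ConjClasses G) = Nat.card (ConjClasses H)) := by
  have hGtoH : ∀ N : ℕ, (∃ f : Fin N → ConjClasses G, Function.Injective f) →
      ∃ f : Fin N → ConjClasses H, Function.Injective f := by
    rintro N ⟨f, hf⟩; exact transfer hGH.1 N f hf
  have hHtoG : ∀ N : ℕ, (∃ f : Fin N → ConjClasses H, Function.Injective f) →
      ∃ f : Fin N → ConjClasses G, Function.Injective f := by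
    rintro N ⟨f, hf⟩; exact transfer hGH.2 N f hf
  have hiff : ∀ N : ℕ, (∃ f : Fin N → ConjClasses G, Function.Injective f) ↔
      ∃ f : Fin N → ConjClasses H, Function.Injective f :=
    fun N => ⟨hGtoH N, hHtoG N⟩
  have hfinG : Finite (ConjClasses H) → Finite (ConjClasses G) := fin_transfer _ _ hGtoH
  have hfinH : Finite (ConjClasses G) → Finite (ConjClasses H) := fin_transfer _ _ hHtoG
  refine ⟨hiff, ⟨fun h => hfinH h, fun h => hfinG h⟩, ?_⟩
  intro hG
  have hH : Finite (ConjClasses H) := hfinH hG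
  exact le_antisymm (card_le_transfer _ _ hGtoH) (card_le_transfer _ _ hHtoG)
end

section
/- Let G and H be finitely generated groups that are two-sided configuration equivalent, and let n be a positive integer. Then the number of normal subgroups of index n in G equals the number of normal subgroups of index n in H. -/
/-!
Configuration equivalence transfers finite quotients. Colour `G` by a surjection `φ` onto a
finite group `Q`; the matching colouring of `H`, read back in `Q`, must change under left
multiplication by the generators of `H` exactly as `φ` changes under the generators of `G`, which
makes it a homomorphism onto `Q` up to a translation. Taking `Q = G ⧸ K` with `K` the
intersection of the finitely many normal subgroups of index `n`, every such subgroup of `G` comes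
from `Q` and pulls back injectively to `H`; by symmetry the two counts agree.
-/

open Subgroup

section NormalSubgroupsOfIndex

variable {G H Q : Type*} [Group G] [Group H] [Group Q]

theorem finite_monoidHom_of_fg [Group.FG G] (M : Type*) [Monoid M] [Finite M] :
    Finite (G →* M) := by
  obtain ⟨k, ⟨P⟩⟩ := Group.fg_iff_nonempty_finite_generators.mp ‹Group.FG G›
  exact Finite.of_injective (fun f : G →* M => f ∘ P.val)
    fun f f' hff' => P.hom_ext f f' (congrFun hff')

theorem exists_monoidHom_perm_ker_eq {n : ℕ} (hn : n ≠ 0) (N : Subgroup G) [N.Normal]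
    (hN : N.index = n) : ∃ ρ : G →* Equiv.Perm (Fin n), ρ.ker = N := by
  have hcard : Nat.card (G ⧸ N) = n := by rw [← index_eq_card, hN]
  have : Finite (G ⧸ N) := Nat.finite_of_card_ne_zero (hcard ▸ hn)
  refine ⟨((Finite.equivFinOfCardEq hcard).permCongrHom : _ →* _).comp
    (MulAction.toPermHom G (G ⧸ N)), ?_⟩
  rw [MonoidHom.ker_mulEquiv_comp, ← normalCore_eq_ker, normalCore_eq_self]

theorem finite_normal_index_eq [Group.FG G] {n : ℕ} (hn : n ≠ 0) :
    Finite {N : Subgroup G // N.Normal ∧ N.index = n} := by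
  have := finite_monoidHom_of_fg (G := G) (Equiv.Perm (Fin n))
  choose ρ hρ using fun N : {N : Subgroup G // N.Normal ∧ N.index = n} =>
    have := N.2.1
    exists_monoidHom_perm_ker_eq hn N.1 N.2.2
  exact Finite.of_injective ρ fun N M hNM => Subtype.ext (by rw [← hρ N, ← hρ M, hNM])

theorem card_normal_index_eq_le_of_surjective {n : ℕ}
    [Finite {M : Subgroup H // M.Normal ∧ M.index = n}] (f : H →* Q) (hf : Function.Surjective f) :
    Nat.card {N : Subgroup Q // N.Normal ∧ N.index = n} ≤
      Nat.card {M : Subgroup H // M.Normal ∧ M.index = n} :=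
  Nat.card_le_card_of_injective
    (fun N => ⟨N.1.comap f, N.2.1.comap f, (index_comap_of_surjective N.1 hf).trans N.2.2⟩)
    fun _ _ hNM => Subtype.ext (comap_injective hf (congrArg Subtype.val hNM))

theorem card_normal_index_eq_le_of_surjective_of_ker_le [Finite Q] {n : ℕ} (φ : G →* Q)
    (hφ : Function.Surjective φ) (hker : ∀ N : Subgroup G, N.Normal → N.index = n → φ.ker ≤ N) :
    Nat.card {N : Subgroup G // N.Normal ∧ N.index = n} ≤
      Nat.card {M : Subgroup Q // M.Normal ∧ M.index = n} := by
  refine Nat.card_le_card_of_surjective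
    (fun M => ⟨M.1.comap φ, M.2.1.comap φ, (index_comap_of_surjective M.1 hφ).trans M.2.2⟩) ?_
  rintro ⟨N, hN, hNn⟩
  have hcomap : (N.map φ).comap φ = N := comap_map_eq_self (hker N hN hNn)
  exact ⟨⟨N.map φ, hN.map φ hφ, by rw [← index_comap_of_surjective _ hφ, hcomap, hNn]⟩,
    Subtype.ext hcomap⟩

theorem exists_finiteIndex_le_normal_index_eq [Group.FG G] {n : ℕ} (hn : n ≠ 0) :
    ∃ K : Subgroup G, K.Normal ∧ K.FiniteIndex ∧
      ∀ N : Subgroup G, N.Normal → N.index = n → K ≤ N := by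
  have := finite_normal_index_eq (G := G) hn
  refine ⟨⨅ N : {N : Subgroup G // N.Normal ∧ N.index = n}, N.1,
    normal_iInf_normal fun N => N.2.1,
    finiteIndex_iInf fun N => finiteIndex_iff.mpr (ne_of_eq_of_ne N.2.2 hn),
    fun N hN hNn =>
      iInf_le (fun N : {N : Subgroup G // N.Normal ∧ N.index = n} => N.1) ⟨N, hN, hNn⟩⟩

end NormalSubgroupsOfIndex

section Configurations

variable {G H Q : Type*} [Group G] [Group H] [Group Q]

theorem ConfigTEquiv.symm (hGH : ConfigTEquiv G H) : ConfigTEquiv H G := ⟨hGH.2, hGH.1⟩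

theorem mem_configT {k m : ℕ} (g : Fin k → G) (c : G → Fin m) (x : G) :
    (c x, fun i => c (g i * x), fun i => c (x * g i)) ∈ ConfigT g c :=
  ⟨x, rfl, fun _ => rfl, fun _ => rfl⟩

theorem exists_left_configuration_of_configT_subset {k m : ℕ} {g : Fin k → G} {c : G → Fin m}
    {h : Fin k → H} {d : H → Fin m} (hsub : ConfigT h d ⊆ ConfigT g c) (x : H) :
    ∃ y : G, c y = d x ∧ ∀ i, c (g i * y) = d (h i * x) := by
  obtain ⟨y, hy, hgy, -⟩ := hsub (mem_configT h d x)
  exact ⟨y, hy, hgy⟩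

theorem exists_monoidHom_of_map_generator_mul {ι : Type*} {h : ι → H}
    (hh : closure (Set.range h) = ⊤) {ψ : H → Q} {a : ι → Q}
    (hψ : ∀ i x, ψ (h i * x) = a i * ψ x) : ∃ f : H →* Q, ∀ x, ψ x = f x * ψ 1 := by
  let S : Subgroup H :=
    { carrier := {w | ∃ q, ∀ x, ψ (w * x) = q * ψ x}
      one_mem' := ⟨1, by simp⟩
      mul_mem' := by
        rintro w v ⟨q, hq⟩ ⟨p, hp⟩
        exact ⟨q * p, fun x => by rw [mul_assoc, hq, hp, mul_assoc]⟩
      inv_mem' := by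
        rintro w ⟨q, hq⟩
        refine ⟨q⁻¹, fun x => ?_⟩
        rw [eq_inv_mul_iff_mul_eq, ← hq, mul_inv_cancel_left] }
  have hS : ∀ w, w ∈ S := by
    rw [← eq_top_iff', eq_top_iff, ← hh, closure_le]
    rintro _ ⟨i, rfl⟩
    exact ⟨a i, hψ i⟩
  have hmul : ∀ w x, ψ (w * x) = ψ w * (ψ 1)⁻¹ * ψ x := by
    intro w x
    obtain ⟨q, hq⟩ := hS w
    have hq1 : ψ w = q * ψ 1 := by simpa using hq 1
    rw [hq, hq1, mul_inv_cancel_right]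
  refine ⟨MonoidHom.mk' (fun x => ψ x * (ψ 1)⁻¹) fun x y => ?_, fun x => ?_⟩
  · rw [hmul]; group
  · simp

theorem ConfigTEquiv.exists_surjective [Group.FG G] [Finite Q] (hGH : ConfigTEquiv G H)
    (φ : G →* Q) (hφ : Function.Surjective φ) : ∃ f : H →* Q, Function.Surjective f := by
  obtain ⟨k, ⟨P⟩⟩ := Group.fg_iff_nonempty_finite_generators.mp ‹Group.FG G›
  let e := Finite.equivFin Q
  obtain ⟨h, d, hh, hconf⟩ := hGH.1 k _ P.val (e ∘ φ) P.closure_eq_top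
  let ψ : H → Q := e.symm ∘ d
  have hψ_mul : ∀ i x, ψ (h i * x) = φ (P.val i) * ψ x := by
    intro i x
    obtain ⟨y, hy, hgy⟩ := exists_left_configuration_of_configT_subset hconf.ge x
    simp only [ψ, Function.comp_apply, ← hy, ← hgy i, Equiv.symm_apply_apply, map_mul]
  have hψ_surj : Function.Surjective ψ := by
    intro q
    obtain ⟨y, rfl⟩ := hφ q
    obtain ⟨x, hx, -⟩ := exists_left_configuration_of_configT_subset hconf.le y
    exact ⟨x, by simp only [ψ, Function.comp_apply, hx, Equiv.symm_apply_apply]⟩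
  obtain ⟨f, hf⟩ := exists_monoidHom_of_map_generator_mul hh hψ_mul
  refine ⟨f, fun q => ?_⟩
  obtain ⟨x, hx⟩ := hψ_surj (q * ψ 1)
  exact ⟨x, mul_right_cancel ((hf x).symm.trans hx)⟩

theorem ConfigTEquiv.card_normal_index_eq_le [Group.FG G] [Group.FG H] (hGH : ConfigTEquiv G H)
    {n : ℕ} (hn : n ≠ 0) :
    Nat.card {N : Subgroup G // N.Normal ∧ N.index = n} ≤
      Nat.card {M : Subgroup H // M.Normal ∧ M.index = n} := by
  obtain ⟨K, hK, hKfin, hKle⟩ := exists_finiteIndex_le_normal_index_eq (G := G) hn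
  obtain ⟨f, hf⟩ := hGH.exists_surjective (QuotientGroup.mk' K) (QuotientGroup.mk'_surjective K)
  have := finite_normal_index_eq (G := H) hn
  calc Nat.card {N : Subgroup G // N.Normal ∧ N.index = n}
      ≤ Nat.card {N : Subgroup (G ⧸ K) // N.Normal ∧ N.index = n} :=
        card_normal_index_eq_le_of_surjective_of_ker_le _ (QuotientGroup.mk'_surjective K)
          fun N hN hNn => (QuotientGroup.ker_mk' K).trans_le (hKle N hN hNn)
    _ ≤ Nat.card {M : Subgroup H // M.Normal ∧ M.index = n} :=
        card_normal_index_eq_le_of_surjective f hf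

end Configurations

theorem stmt10 (G H : Type*) [Group G] [Group H] [Group.FG G] [Group.FG H]
    (hGH : ConfigTEquiv G H) (n : ℕ) (hn : 0 < n) :
    Nat.card {N : Subgroup G // N.Normal ∧ N.index = n} =
      Nat.card {M : Subgroup H // M.Normal ∧ M.index = n} :=
  (hGH.card_normal_index_eq_le hn.ne').antisymm (hGH.symm.card_normal_index_eq_le hn.ne')
end

section
/- Let R = ℤ[t, t^{-1}] and let K be the group of 3×3 matrices (A, B, C, D) := [[1, B, D], [0, A, C], [0, 0, 1]] over R with B, C, D ∈ R and A a power of t. Let N_0 = {(1, 0, 0, D) : D ∈ ℤ[t]} and Z' = {(1, 0, 0, D) : D ∈ 2ℤ + tℤ[t]}. Then N_0 and Z' are central (hence normal) subgroups of K, the quotient G := K/N_0 is torsion-free, the quotient H := K/Z' contains a nontrivial element of finite order, and consequently G and H are not isomorphic. -/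
open LaurentPolynomial

/-- The ring `R = ℤ[t, t⁻¹]` of Laurent polynomials over `ℤ`. -/
abbrev LaurentZ : Type := LaurentPolynomial ℤ

/-- The upper triangular matrix `(A, B, C, D) = [[1, B, D], [0, A, C], [0, 0, 1]]`. -/
noncomputable def Mquad (A B C D : LaurentZ) : Matrix (Fin 3) (Fin 3) LaurentZ :=
  !![1, B, D; 0, A, C; 0, 0, 1]

/-- The set of invertible `3 × 3` matrices over `ℤ[t, t⁻¹]` of the form `(A, B, C, D)` with
`A = tᵏ` for some `k : ℤ`. -/
def Kset : Set (Matrix (Fin 3) (Fin 3) LaurentZ)ˣ :=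
  { u | ∃ (k : ℤ) (B C D : LaurentZ),
      (u : Matrix (Fin 3) (Fin 3) LaurentZ) = Mquad (T k) B C D }

/-- The December 2024 Mathlib definition of `Monoid.IsTorsionFree` (removed since):
every non-identity element has infinite order. -/
def Monoid.IsTorsionFree (G : Type*) [Monoid G] : Prop :=
  ∀ g : G, g ≠ 1 → ¬IsOfFinOrder g

/-! The matrices `(1, 0, 0, D)` are central because `(A, B, C, D') (1, 0, 0, D) = (A, B, C, D' + D)`
from either side. The `A`-entry is multiplicative, so a power of `(tᵏ, B, C, D)` lies in `N₀` only
if `k = 0`; and `(1, B, C, D)ⁿ = (1, nB, nC, nD + (n choose 2) BC)`, so `uⁿ ∈ N₀` with `n ≠ 0`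
forces `B = C = 0` and `nD ∈ ℤ[t]`, hence `D ∈ ℤ[t]`: `K ⧸ N₀` is torsion-free. In `K ⧸ Z'` the
class of `(1, 0, 0, 1)` is nontrivial, as `1 ∉ 2ℤ + tℤ[t]`, while its square `(1, 0, 0, 2)` lies
in `Z'`. -/

local notation "M₃" => Matrix (Fin 3) (Fin 3) LaurentZ

instance : CharZero LaurentZ :=
  charZero_of_injective_algebraMap (R := Polynomial ℤ) Polynomial.toLaurent_injective

theorem Mquad_mul (A B C D X Y Z W : LaurentZ) :
    Mquad A B C D * Mquad X Y Z W = Mquad (A * X) (Y + B * X) (A * Z + C) (D + B * Z + W) := by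
  ext i j
  fin_cases i <;> fin_cases j <;>
    (simp [Mquad, Matrix.mul_apply, Fin.sum_univ_three]; try ring)

theorem Mquad_one_zero_zero_zero : Mquad 1 0 0 0 = 1 := by
  ext i j
  fin_cases i <;> fin_cases j <;> simp [Mquad]

theorem Mquad_inj {A B C D A' B' C' D' : LaurentZ} :
    Mquad A B C D = Mquad A' B' C' D' ↔ A = A' ∧ B = B' ∧ C = C' ∧ D = D' := by
  refine ⟨fun h => ⟨?_, ?_, ?_, ?_⟩, fun ⟨rfl, rfl, rfl, rfl⟩ => rfl⟩
  · simpa [Mquad] using congrFun (congrFun h 1) 1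
  · simpa [Mquad] using congrFun (congrFun h 0) 1
  · simpa [Mquad] using congrFun (congrFun h 1) 2
  · simpa [Mquad] using congrFun (congrFun h 0) 2

theorem Mquad_central_mul (D E : LaurentZ) :
    Mquad 1 0 0 D * Mquad 1 0 0 E = Mquad 1 0 0 (D + E) := by
  simp [Mquad_mul]

theorem Mquad_commute_central (A B C D E : LaurentZ) :
    Commute (Mquad A B C D) (Mquad 1 0 0 E) := by
  simp only [Commute, SemiconjBy, Mquad_mul, Mquad_inj]
  refine ⟨?_, ?_, ?_, ?_⟩ <;> ring

theorem Mquad_pow (A B C D : LaurentZ) (n : ℕ) :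
    ∃ B' C' D', Mquad A B C D ^ n = Mquad (A ^ n) B' C' D' := by
  induction n with
  | zero => exact ⟨0, 0, 0, by rw [pow_zero, pow_zero, Mquad_one_zero_zero_zero]⟩
  | succ n ih =>
    obtain ⟨B', C', D', h⟩ := ih
    exact ⟨_, _, _, by rw [pow_succ, h, Mquad_mul, pow_succ]⟩

theorem Mquad_one_pow (B C D : LaurentZ) (n : ℕ) :
    Mquad 1 B C D ^ n = Mquad 1 (n * B) (n * C) (n * D + n.choose 2 * (B * C)) := by
  induction n with
  | zero => simp [Mquad_one_zero_zero_zero]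
  | succ n ih =>
    rw [pow_succ, ih, Mquad_mul, Mquad_inj, Nat.choose_succ_succ, Nat.choose_one_right]
    push_cast
    refine ⟨?_, ?_, ?_, ?_⟩ <;> ring

theorem Mquad_T_pow_eq_central {k : ℤ} {B C D E : LaurentZ} {n : ℕ} (hn : n ≠ 0)
    (h : Mquad (T k) B C D ^ n = Mquad 1 0 0 E) :
    k = 0 ∧ B = 0 ∧ C = 0 ∧ (n : LaurentZ) * D = E := by
  have hk : k = 0 := by
    obtain ⟨B', C', D', h'⟩ := Mquad_pow (T k) B C D n
    have hT : (T (n * k) : LaurentZ) = T 0 := by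
      rw [← T_pow, T_zero]
      exact (Mquad_inj.mp (h'.symm.trans h)).1
    have hdeg := congrArg degree hT
    rw [degree_T, degree_T] at hdeg
    have hnk : (n : ℤ) * k = 0 := by exact_mod_cast hdeg
    exact (mul_eq_zero.mp hnk).resolve_left (by exact_mod_cast hn)
  subst hk
  have hn' : (n : LaurentZ) ≠ 0 := Nat.cast_ne_zero.mpr hn
  rw [T_zero, Mquad_one_pow, Mquad_inj] at h
  obtain ⟨-, hB, hC, hD⟩ := h
  obtain rfl : B = 0 := (mul_eq_zero.mp hB).resolve_left hn'
  obtain rfl : C = 0 := (mul_eq_zero.mp hC).resolve_left hn'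
  simpa using hD

theorem LaurentPolynomial.exists_toLaurent_of_C_mul_eq {R : Type*} [Semiring R] [NoZeroDivisors R]
    {a : R} (ha : a ≠ 0) {f : R[T;T⁻¹]} {p : Polynomial R} (h : C a * f = p.toLaurent) :
    ∃ q : Polynomial R, f = q.toLaurent := by
  obtain ⟨m, f', hf'⟩ := exists_T_pow f
  have hpoly : Polynomial.C a * f' = p * Polynomial.X ^ m := by
    apply Polynomial.toLaurent_injective
    rw [map_mul, map_mul, hf', Polynomial.toLaurent_C, Polynomial.toLaurent_X_pow, ← mul_assoc, h]
  obtain ⟨q, rfl⟩ : Polynomial.X ^ m ∣ f' := by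
    refine Polynomial.X_pow_dvd_iff.mpr fun d hd => ?_
    have hcoeff := congrArg (Polynomial.coeff · d) hpoly
    simp only [Polynomial.coeff_C_mul, Polynomial.coeff_mul_X_pow', if_neg (not_le.mpr hd)]
      at hcoeff
    exact (mul_eq_zero.mp hcoeff).resolve_left ha
  refine ⟨q, (isUnit_T (m : ℤ)).mul_right_cancel ?_⟩
  rw [← hf', map_mul, Polynomial.toLaurent_X_pow, T_mul]

theorem Subgroup.normal_of_le_center {G : Type*} [Group G] {N : Subgroup G}
    (h : N ≤ Subgroup.center G) : N.Normal :=
  ⟨fun n hn g => by rwa [Subgroup.mem_center_iff.mp (h hn) g, mul_inv_cancel_right]⟩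

theorem QuotientGroup.isTorsionFree_of_pow_mem {G : Type*} [Group G] (N : Subgroup G) [N.Normal]
    (h : ∀ (g : G) (n : ℕ), n ≠ 0 → g ^ n ∈ N → g ∈ N) : Monoid.IsTorsionFree (G ⧸ N) := by
  intro x hx hfin
  obtain ⟨g, rfl⟩ := QuotientGroup.mk_surjective x
  obtain ⟨n, hn, hgn⟩ := isOfFinOrder_iff_pow_eq_one.mp hfin
  rw [← QuotientGroup.mk_pow, QuotientGroup.eq_one_iff] at hgn
  exact hx ((QuotientGroup.eq_one_iff g).mpr (h g n hn.ne' hgn))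

theorem Monoid.IsTorsionFree.isEmpty_mulEquiv {G H : Type*} [Monoid G] [Monoid H]
    (hG : Monoid.IsTorsionFree G) {x : H} (hx : x ≠ 1) (hfin : IsOfFinOrder x) :
    IsEmpty (G ≃* H) :=
  ⟨fun φ => hG (φ.symm x) (by simpa using hx) (φ.symm.toMonoidHom.isOfFinOrder hfin)⟩

noncomputable def centralUnit (D : LaurentZ) : M₃ˣ where
  val := Mquad 1 0 0 D
  inv := Mquad 1 0 0 (-D)
  val_inv := by rw [Mquad_central_mul, add_neg_cancel, Mquad_one_zero_zero_zero]
  inv_val := by rw [Mquad_central_mul, neg_add_cancel, Mquad_one_zero_zero_zero]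

noncomputable def evenConstantCoeff : AddSubgroup (Polynomial ℤ) :=
  (AddSubgroup.even ℤ).comap (Polynomial.lcoeff ℤ 0).toAddMonoidHom

section

variable (K : Subgroup M₃ˣ)

def centralSubgroup (S : AddSubgroup (Polynomial ℤ)) : Subgroup K where
  carrier := {u | ∃ D ∈ S, ((u : M₃ˣ) : M₃) = Mquad 1 0 0 D.toLaurent}
  one_mem' := ⟨0, S.zero_mem, by simp [Mquad_one_zero_zero_zero]⟩
  mul_mem' := by
    rintro u v ⟨D, hD, hu⟩ ⟨E, hE, hv⟩
    exact ⟨D + E, S.add_mem hD hE, by simp [hu, hv, Mquad_central_mul]⟩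
  inv_mem' := by
    rintro u ⟨D, hD, hu⟩
    refine ⟨-D, S.neg_mem hD, Units.inv_eq_of_mul_eq_one_right ?_⟩
    rw [hu, Mquad_central_mul, map_neg, add_neg_cancel, Mquad_one_zero_zero_zero]

variable {K}

theorem centralSubgroup_le_center (hK : (K : Set M₃ˣ) ⊆ Kset) (S : AddSubgroup (Polynomial ℤ)) :
    centralSubgroup K S ≤ Subgroup.center K := by
  rintro u ⟨D, -, hu⟩
  refine Subgroup.mem_center_iff.mpr fun v => ?_
  obtain ⟨k, B, C, D', hv⟩ := hK v.2
  refine Subtype.ext (Units.ext ?_)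
  simp only [Subgroup.coe_mul, Units.val_mul, hu, hv]
  exact (Mquad_commute_central _ _ _ _ _).eq

theorem mem_centralSubgroup_top_of_pow_mem (hK : (K : Set M₃ˣ) ⊆ Kset) {u : K} {n : ℕ}
    (hn : n ≠ 0) (h : u ^ n ∈ centralSubgroup K ⊤) : u ∈ centralSubgroup K ⊤ := by
  obtain ⟨P, -, hP⟩ := h
  obtain ⟨k, B, C, D, hu⟩ := hK u.2
  have hpow : Mquad (T k) B C D ^ n = Mquad 1 0 0 P.toLaurent := by
    rw [← hu, ← hP]
    simp
  obtain ⟨rfl, rfl, rfl, hD⟩ := Mquad_T_pow_eq_central hn hpow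
  obtain ⟨Q, rfl⟩ := exists_toLaurent_of_C_mul_eq (a := (n : ℤ)) (by exact_mod_cast hn)
    (by rwa [map_natCast])
  exact ⟨Q, trivial, by rw [hu, T_zero]⟩

theorem exists_ne_one_isOfFinOrder_quotient_evenConstantCoeff (hK : Kset ⊆ K)
    [(centralSubgroup K evenConstantCoeff).Normal] :
    ∃ x : K ⧸ centralSubgroup K evenConstantCoeff, x ≠ 1 ∧ IsOfFinOrder x := by
  let z : K := ⟨centralUnit 1, hK ⟨0, 0, 0, 1, by rw [T_zero]; rfl⟩⟩
  refine ⟨z, fun h => ?_, isOfFinOrder_iff_pow_eq_one.mpr ⟨2, two_pos, ?_⟩⟩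
  · obtain ⟨P, hP, hz⟩ := (QuotientGroup.eq_one_iff z).mp h
    obtain rfl : P = 1 := Polynomial.toLaurent_injective (by
      rw [map_one]; exact (Mquad_inj.mp hz).2.2.2.symm)
    simp [evenConstantCoeff] at hP
  · rw [← QuotientGroup.mk_pow, QuotientGroup.eq_one_iff]
    refine ⟨2, by simp [evenConstantCoeff], ?_⟩
    simp [z, centralUnit, sq, Mquad_central_mul, one_add_one_eq_two, map_ofNat]

end

theorem stmt18 (K : Subgroup (Matrix (Fin 3) (Fin 3) LaurentZ)ˣ)
    (hK : (K : Set (Matrix (Fin 3) (Fin 3) LaurentZ)ˣ) = Kset) :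
    ∃ N₀ Z' : Subgroup K,
      -- `N₀ = {(1,0,0,D) : D ∈ ℤ[t]}`
      (N₀ : Set K) = { u : K | ∃ D : Polynomial ℤ,
          ((u : (Matrix (Fin 3) (Fin 3) LaurentZ)ˣ) : Matrix (Fin 3) (Fin 3) LaurentZ) =
            Mquad 1 0 0 D.toLaurent } ∧
      -- `Z' = {(1,0,0,D) : D ∈ 2ℤ + tℤ[t]}`
      (Z' : Set K) = { u : K | ∃ D : Polynomial ℤ, Even (D.coeff 0) ∧
          ((u : (Matrix (Fin 3) (Fin 3) LaurentZ)ˣ) : Matrix (Fin 3) (Fin 3) LaurentZ) =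
            Mquad 1 0 0 D.toLaurent } ∧
      -- central, hence normal
      N₀ ≤ Subgroup.center K ∧ Z' ≤ Subgroup.center K ∧ N₀.Normal ∧ Z'.Normal ∧
      (∀ (hN : N₀.Normal) (hZ : Z'.Normal),
        letI := hN; letI := hZ;
        -- `G := K ⧸ N₀` is torsion-free
        Monoid.IsTorsionFree (K ⧸ N₀) ∧
        -- `H := K ⧸ Z'` contains a nontrivial element of finite order
        (∃ x : K ⧸ Z', x ≠ 1 ∧ IsOfFinOrder x) ∧
        -- consequently `G` and `H` are not isomorphic
        IsEmpty ((K ⧸ N₀) ≃* (K ⧸ Z'))) := by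
  have hN := centralSubgroup_le_center hK.subset ⊤
  have hZ := centralSubgroup_le_center hK.subset evenConstantCoeff
  refine ⟨centralSubgroup K ⊤, centralSubgroup K evenConstantCoeff,
    by ext; simp [centralSubgroup], by ext; simp [centralSubgroup, evenConstantCoeff], hN, hZ,
    Subgroup.normal_of_le_center hN, Subgroup.normal_of_le_center hZ, fun _ _ => ?_⟩
  have htf := QuotientGroup.isTorsionFree_of_pow_mem (centralSubgroup K ⊤)
    fun _ _ hn => mem_centralSubgroup_top_of_pow_mem hK.subset hn
  obtain ⟨x, hx, hfin⟩ := exists_ne_one_isOfFinOrder_quotient_evenConstantCoeff hK.symm.subset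
  exact ⟨htf, ⟨x, hx, hfin⟩, htf.isEmpty_mulEquiv hx hfin⟩
end
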